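/- arXiv:1211.2522 — 4 statements merged into one kernel-verified Lean document; each statement's English description precedes it below -/
import Mathlib

section
/- Let H be a real inner product space, let Y_1,…,Y_n ∈ H, let Ȳ ∈ H be a fixed element, and let 1 ≤ p < n. Define the linear operator K̂ on H by K̂x = (n−p)^{−2} Σ_{k=1}^p Σ_{t,s=1}^{n−p} ⟨Y_{t+k}−Ȳ, Y_{s+k}−Ȳ⟩ ⟨Y_s−Ȳ, x⟩ (Y_t−Ȳ), and define the (n−p)×(n−p) real matrix K* = (n−p)^{−2} Σ_{k=1}^p A_k A_0, where (A_k)_{ts} = ⟨Y_{t+k}−Ȳ, Y_{s+k}−Ȳ⟩ for k = 0,1,…,p. If γ = (γ_1,…,γ_{n−p})ᵀ is an eigenvector of K* with eigenvalue θ̂, then the element ψ̂ = Σ_{t=1}^{n−p} γ_t (Y_t−Ȳ) satisfies K̂ψ̂ = θ̂ ψ̂. Consequently every nonzero eigenvalue of K* is a nonzero eigenvalue of K̂. -/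
open scoped RealInnerProductSpace Matrix

/-! With `e t = Y (t + 1) - Ȳ` and `L γ = ∑ t, γ t • e t`, the matrix `A 0` is the Gram matrix of
`e`, so `⟪e s, L γ⟫ = (A 0 *ᵥ γ) s` and hence `K̂ (L γ) = L (K* *ᵥ γ)`: `L` intertwines `K*` with `K̂`.
It can kill an eigenvector `γ` only if `A 0 *ᵥ γ = 0`, which forces `K* *ᵥ γ = 0`, i.e. eigenvalue
zero. -/

namespace Matrix

variable {ι H : Type*} [Fintype ι] [NormedAddCommGroup H] [InnerProductSpace ℝ H]

lemma inner_linearCombination_eq_gram_mulVec (e : ι → H) (γ : ι → ℝ) (s : ι) :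
    ⟪e s, Fintype.linearCombination ℝ e γ⟫ = (gram ℝ e *ᵥ γ) s := by
  simp only [Fintype.linearCombination_apply, inner_sum, real_inner_smul_right, mulVec,
    dotProduct, gram_apply, mul_comm]

lemma gram_mulVec_eq_zero_of_linearCombination_eq_zero {e : ι → H} {γ : ι → ℝ}
    (h : Fintype.linearCombination ℝ e γ = 0) : gram ℝ e *ᵥ γ = 0 :=
  funext fun s => by
    rw [← inner_linearCombination_eq_gram_mulVec, h, inner_zero_right, Pi.zero_apply]

lemma sum_sum_mul_inner_linearCombination_smul (B : Matrix ι ι ℝ) (e : ι → H) (γ : ι → ℝ) :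
    ∑ t, ∑ s, (B t s * ⟪e s, Fintype.linearCombination ℝ e γ⟫) • e t =
      Fintype.linearCombination ℝ e ((B * gram ℝ e) *ᵥ γ) := by
  rw [← mulVec_mulVec, Fintype.linearCombination_apply ℝ e (B *ᵥ (gram ℝ e *ᵥ γ))]
  refine Finset.sum_congr rfl fun t _ => ?_
  simp only [← Finset.sum_smul, inner_linearCombination_eq_gram_mulVec, mulVec, dotProduct]

end Matrix

open Matrix

theorem stmt3_general
    {H : Type*} [NormedAddCommGroup H] [InnerProductSpace ℝ H]
    (n p : ℕ)
    (Y : ℕ → H) (Ybar : H)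
    -- the matrices A_k, k = 0, 1, …, p, with (A_k)_{ts} = ⟪Y_{t+k} − Ȳ, Y_{s+k} − Ȳ⟫
    (A : ℕ → Matrix (Fin (n - p)) (Fin (n - p)) ℝ)
    (hA : ∀ k, k ≤ p → ∀ t s : Fin (n - p),
      A k t s = ⟪Y (t.val + 1 + k) - Ybar, Y (s.val + 1 + k) - Ybar⟫)
    -- the matrix K* = (n−p)^{−2} Σ_{k=1}^p A_k A_0
    (Kstar : Matrix (Fin (n - p)) (Fin (n - p)) ℝ)
    (hKstar : Kstar = (((n - p : ℕ) : ℝ) ^ 2)⁻¹ • ∑ k ∈ Finset.Icc 1 p, A k * A 0)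
    -- the operator K̂ on H
    (Khat : H → H)
    (hKhat : ∀ x : H, Khat x = (((n - p : ℕ) : ℝ) ^ 2)⁻¹ •
      ∑ k ∈ Finset.Icc 1 p, ∑ t : Fin (n - p), ∑ s : Fin (n - p),
        (⟪Y (t.val + 1 + k) - Ybar, Y (s.val + 1 + k) - Ybar⟫ *
          ⟪Y (s.val + 1) - Ybar, x⟫) • (Y (t.val + 1) - Ybar)) :
    -- if γ is an eigenvector of K* with eigenvalue θ̂, then ψ̂ = Σ_t γ_t (Y_t − Ȳ)
    -- satisfies K̂ ψ̂ = θ̂ ψ̂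
    (∀ (θhat : ℝ) (γ : Fin (n - p) → ℝ), Kstar.mulVec γ = θhat • γ →
      Khat (∑ t : Fin (n - p), γ t • (Y (t.val + 1) - Ybar)) =
        θhat • (∑ t : Fin (n - p), γ t • (Y (t.val + 1) - Ybar))) ∧
    -- consequently, every nonzero eigenvalue of K* is a nonzero eigenvalue of K̂
    (∀ θhat : ℝ, θhat ≠ 0 →
      (∃ γ : Fin (n - p) → ℝ, γ ≠ 0 ∧ Kstar.mulVec γ = θhat • γ) →
      ∃ v : H, v ≠ 0 ∧ Khat v = θhat • v) := by
  set e : Fin (n - p) → H := fun t => Y (t.val + 1) - Ybar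
  set L := Fintype.linearCombination ℝ e
  have hA0 : A 0 = gram ℝ e := by
    ext t s
    simp [hA 0 (Nat.zero_le p), e, gram_apply]
  have hKhat_L : ∀ γ, Khat (L γ) = L (Kstar *ᵥ γ) := by
    intro γ
    rw [hKhat, hKstar, smul_mulVec, map_smul, sum_mulVec, map_sum, hA0]
    congr 1
    refine Finset.sum_congr rfl fun k hk => ?_
    rw [← sum_sum_mul_inner_linearCombination_smul]
    simp only [hA k (Finset.mem_Icc.mp hk).2, e, L]
  have hL : ∀ γ, L γ = ∑ t, γ t • (Y (t.val + 1) - Ybar) := Fintype.linearCombination_apply ℝ e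
  refine ⟨fun θ γ hγ => ?_, fun θ hθ ⟨γ, hγ0, hγ⟩ => ⟨L γ, fun hLγ => hγ0 ?_, ?_⟩⟩
  · rw [← hL, hKhat_L, hγ, map_smul]
  · have hK : Kstar *ᵥ γ = 0 := by
      simp only [hKstar, smul_mulVec, sum_mulVec, ← mulVec_mulVec, hA0,
        gram_mulVec_eq_zero_of_linearCombination_eq_zero hLγ, mulVec_zero,
        Finset.sum_const_zero, smul_zero]
    exact (smul_eq_zero.mp (hγ ▸ hK)).resolve_left hθ
  · rw [hKhat_L, hγ, map_smul]

/-- **Proposition 2** (duality between the sample operator `K̂` on `H` and the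
finite matrix `K*`).  Curves are `Y 1, …, Y n` (the values of `Y : ℕ → H` at
indices `1,…,n`), `Ȳ` is a fixed element of `H`, and `1 ≤ p < n`. -/
theorem stmt3
    {H : Type*} [NormedAddCommGroup H] [InnerProductSpace ℝ H]
    (n p : ℕ) (hp : 1 ≤ p) (hpn : p < n)
    (Y : ℕ → H) (Ybar : H)
    -- the matrices A_k, k = 0, 1, …, p, with (A_k)_{ts} = ⟪Y_{t+k} − Ȳ, Y_{s+k} − Ȳ⟫
    (A : ℕ → Matrix (Fin (n - p)) (Fin (n - p)) ℝ)
    (hA : ∀ k, k ≤ p → ∀ t s : Fin (n - p),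
      A k t s = ⟪Y (t.val + 1 + k) - Ybar, Y (s.val + 1 + k) - Ybar⟫)
    -- the matrix K* = (n−p)^{−2} Σ_{k=1}^p A_k A_0
    (Kstar : Matrix (Fin (n - p)) (Fin (n - p)) ℝ)
    (hKstar : Kstar = (((n - p : ℕ) : ℝ) ^ 2)⁻¹ • ∑ k ∈ Finset.Icc 1 p, A k * A 0)
    -- the operator K̂ on H
    (Khat : H → H)
    (hKhat : ∀ x : H, Khat x = (((n - p : ℕ) : ℝ) ^ 2)⁻¹ •
      ∑ k ∈ Finset.Icc 1 p, ∑ t : Fin (n - p), ∑ s : Fin (n - p),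
        (⟪Y (t.val + 1 + k) - Ybar, Y (s.val + 1 + k) - Ybar⟫ *
          ⟪Y (s.val + 1) - Ybar, x⟫) • (Y (t.val + 1) - Ybar)) :
    -- if γ is an eigenvector of K* with eigenvalue θ̂, then ψ̂ = Σ_t γ_t (Y_t − Ȳ)
    -- satisfies K̂ ψ̂ = θ̂ ψ̂
    (∀ (θhat : ℝ) (γ : Fin (n - p) → ℝ), Kstar.mulVec γ = θhat • γ →
      Khat (∑ t : Fin (n - p), γ t • (Y (t.val + 1) - Ybar)) =
        θhat • (∑ t : Fin (n - p), γ t • (Y (t.val + 1) - Ybar))) ∧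
    -- consequently, every nonzero eigenvalue of K* is a nonzero eigenvalue of K̂
    (∀ θhat : ℝ, θhat ≠ 0 →
      (∃ γ : Fin (n - p) → ℝ, γ ≠ 0 ∧ Kstar.mulVec γ = θhat • γ) →
      ∃ v : H, v ≠ 0 ∧ Khat v = θhat • v) :=
  stmt3_general n p Y Ybar A hA Kstar hKstar Khat hKhat
end

section
/- Let N₁, N₂ be finite-dimensional subspaces of a real separable Hilbert space H of dimensions d₁ ≥ 1 and d₂ ≥ 1, with orthonormal bases {ζ_{11},…,ζ_{1d₁}} and {ζ_{21},…,ζ_{2d₂}}, and define D̃(N₁, N₂) = sqrt(1 − (1/max(d₁,d₂)) Σ_{k=1}^{d₁} Σ_{j=1}^{d₂} ⟨ζ_{2j}, ζ_{1k}⟩²). Then: (a) D̃(N₁, N₂) ∈ [0, 1]; (b) D̃(N₁, N₂) = 0 if and only if N₁ = N₂; (c) D̃(N₁, N₂) = 1 if and only if N₁ ⊥ N₂, i.e. ⟨x, y⟩ = 0 for all x ∈ N₁, y ∈ N₂; and (d) if d₁ = d₂ = d then D̃(N₁, N₂) = D(N₁, N₂), where D(N₁, N₂) = sqrt(1 − (1/d)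 Σ_{j,k=1}^d ⟨ζ_{2j}, ζ_{1k}⟩²). -/
open scoped RealInnerProductSpace

/-- The modified discrepancy
`D̃(N₁,N₂) = sqrt(1 − (1/max(d₁,d₂)) Σ_{k,j} ⟪ζ_{2j}, ζ_{1k}⟫²)` between
subspaces of possibly different dimensions `d₁`, `d₂`, computed from orthonormal
bases `ζ₁ : Fin d₁ → H` and `ζ₂ : Fin d₂ → H`. -/
noncomputable def discrDTilde {H : Type*} [NormedAddCommGroup H] [InnerProductSpace ℝ H]
    (d₁ d₂ : ℕ) (ζ₁ : Fin d₁ → H) (ζ₂ : Fin d₂ → H) : ℝ :=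
  Real.sqrt (1 - (1 / (max d₁ d₂ : ℝ)) *
    ∑ k : Fin d₁, ∑ j : Fin d₂, ⟪ζ₂ j, ζ₁ k⟫ ^ 2)

/-- The discrepancy `D(N₁, N₂)` between `d`-dimensional subspaces. -/
noncomputable def discrD {H : Type*} [NormedAddCommGroup H] [InnerProductSpace ℝ H]
    (d : ℕ) (ζ₁ ζ₂ : Fin d → H) : ℝ :=
  Real.sqrt (1 - (1 / (d : ℝ)) * ∑ j : Fin d, ∑ k : Fin d, ⟪ζ₂ j, ζ₁ k⟫ ^ 2)

/-!
For orthonormal families `u` and `v`, `∑ᵢ ∑ⱼ ⟪vⱼ, uᵢ⟫²` is the sum of the squared lengths of the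
projections of the `uᵢ` onto `span v`. By Bessel each term is at most `1`, with equality exactly
when `uᵢ ∈ span v`; so the sum is at most `min d₁ d₂`, it reaches `max d₁ d₂` exactly when the
spans coincide, and it vanishes exactly when they are orthogonal.
-/

section

variable {H : Type*} [NormedAddCommGroup H] [InnerProductSpace ℝ H]

namespace Orthonormal

variable {ι : Type*} [Fintype ι] {v : ι → H}

theorem norm_sub_sum_inner_smul_sq (hv : Orthonormal ℝ v) (x : H) :
    ‖x - ∑ i, ⟪v i, x⟫ • v i‖ ^ 2 = ‖x‖ ^ 2 - ∑ i, ⟪v i, x⟫ ^ 2 := by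
  have h_proj : ‖∑ i, ⟪v i, x⟫ • v i‖ ^ 2 = ∑ i, ⟪v i, x⟫ ^ 2 := by
    rw [← real_inner_self_eq_norm_sq, inner_sum]
    simp [inner_smul_right, hv.inner_left_fintype, sq]
  have h_cross : ⟪x, ∑ i, ⟪v i, x⟫ • v i⟫ = ∑ i, ⟪v i, x⟫ ^ 2 := by
    simp [inner_sum, inner_smul_right, real_inner_comm x, sq]
  rw [norm_sub_sq_real, h_proj, h_cross]
  ring

theorem sum_inner_sq_le (hv : Orthonormal ℝ v) (x : H) : ∑ i, ⟪v i, x⟫ ^ 2 ≤ ‖x‖ ^ 2 := by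
  simpa [Real.norm_eq_abs, sq_abs] using hv.sum_inner_products_le (s := Finset.univ) x

theorem sum_inner_smul_eq_self_iff (hv : Orthonormal ℝ v) (x : H) :
    ∑ i, ⟪v i, x⟫ • v i = x ↔ x ∈ Submodule.span ℝ (Set.range v) := by
  refine ⟨fun hx => (Submodule.mem_span_range_iff_exists_fun ℝ).mpr ⟨_, hx⟩, fun hx => ?_⟩
  obtain ⟨c, rfl⟩ := (Submodule.mem_span_range_iff_exists_fun ℝ).mp hx
  simp only [hv.inner_right_fintype]

theorem sum_inner_sq_eq_norm_sq_iff (hv : Orthonormal ℝ v) (x : H) :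
    ∑ i, ⟪v i, x⟫ ^ 2 = ‖x‖ ^ 2 ↔ x ∈ Submodule.span ℝ (Set.range v) := by
  calc ∑ i, ⟪v i, x⟫ ^ 2 = ‖x‖ ^ 2 ↔ ‖x - ∑ i, ⟪v i, x⟫ • v i‖ ^ 2 = 0 := by
        rw [hv.norm_sub_sum_inner_smul_sq, sub_eq_zero, eq_comm]
    _ ↔ ∑ i, ⟪v i, x⟫ • v i = x := by
        rw [pow_eq_zero_iff two_ne_zero, norm_eq_zero, sub_eq_zero, eq_comm]
    _ ↔ x ∈ Submodule.span ℝ (Set.range v) := hv.sum_inner_smul_eq_self_iff x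

end Orthonormal

section SumInnerSq

variable {ι κ : Type*} [Fintype κ]

theorem Orthonormal.sum_inner_sq_le_one {u : ι → H} {v : κ → H} (hu : Orthonormal ℝ u)
    (hv : Orthonormal ℝ v) (i : ι) : ∑ j, ⟪v j, u i⟫ ^ 2 ≤ 1 := by
  simpa [hu.norm_eq_one] using hv.sum_inner_sq_le (u i)

variable [Fintype ι]

def sumInnerSq (u : ι → H) (v : κ → H) : ℝ :=
  ∑ i, ∑ j, ⟪v j, u i⟫ ^ 2

theorem sumInnerSq_comm (u : ι → H) (v : κ → H) : sumInnerSq u v = sumInnerSq v u := by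
  rw [sumInnerSq, Finset.sum_comm]
  simp only [sumInnerSq, real_inner_comm]

theorem sumInnerSq_nonneg (u : ι → H) (v : κ → H) : 0 ≤ sumInnerSq u v :=
  Finset.sum_nonneg fun _ _ => Finset.sum_nonneg fun _ _ => sq_nonneg _

variable {u : ι → H} {v : κ → H}

theorem sumInnerSq_le_card (hu : Orthonormal ℝ u) (hv : Orthonormal ℝ v) :
    sumInnerSq u v ≤ Fintype.card ι := by
  calc sumInnerSq u v ≤ ∑ _i : ι, (1 : ℝ) :=
        Finset.sum_le_sum fun i _ => hu.sum_inner_sq_le_one hv i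
    _ = Fintype.card ι := by simp

theorem sumInnerSq_eq_card_iff (hu : Orthonormal ℝ u) (hv : Orthonormal ℝ v) :
    sumInnerSq u v = Fintype.card ι ↔
      Submodule.span ℝ (Set.range u) ≤ Submodule.span ℝ (Set.range v) := by
  have h_terms := Finset.sum_eq_sum_iff_of_le fun i (_ : i ∈ Finset.univ) =>
    hu.sum_inner_sq_le_one hv i
  simp only [Finset.sum_const, Finset.card_univ, nsmul_eq_mul, mul_one,
    Finset.mem_univ, forall_const] at h_terms
  rw [sumInnerSq, h_terms, Submodule.span_le, Set.range_subset_iff]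
  refine forall_congr' fun i => ?_
  rw [SetLike.mem_coe, ← hv.sum_inner_sq_eq_norm_sq_iff, hu.norm_eq_one, one_pow]

theorem sumInnerSq_eq_zero_iff :
    sumInnerSq u v = 0 ↔ Submodule.span ℝ (Set.range u) ⟂ Submodule.span ℝ (Set.range v) := by
  simp only [sumInnerSq, Submodule.isOrtho_span, Set.forall_mem_range]
  rw [Fintype.sum_eq_zero_iff_of_nonneg fun _ => Finset.sum_nonneg fun _ _ => sq_nonneg _]
  simp only [funext_iff, Pi.zero_apply,
    Fintype.sum_eq_zero_iff_of_nonneg fun _ => sq_nonneg _, sq_eq_zero_iff,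
    real_inner_comm]

end SumInnerSq

section Discrepancy

variable {d₁ d₂ : ℕ} {ζ₁ : Fin d₁ → H} {ζ₂ : Fin d₂ → H}

theorem discrDTilde_eq_sqrt (d₁ d₂ : ℕ) (ζ₁ : Fin d₁ → H) (ζ₂ : Fin d₂ → H) :
    discrDTilde d₁ d₂ ζ₁ ζ₂ = √(1 - sumInnerSq ζ₁ ζ₂ / (max d₁ d₂ : ℝ)) := by
  rw [discrDTilde, one_div_mul_eq_div]
  rfl

theorem discrDTilde_nonneg : 0 ≤ discrDTilde d₁ d₂ ζ₁ ζ₂ :=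
  Real.sqrt_nonneg _

theorem discrDTilde_le_one : discrDTilde d₁ d₂ ζ₁ ζ₂ ≤ 1 := by
  rw [discrDTilde_eq_sqrt, Real.sqrt_le_one, sub_le_self_iff]
  exact div_nonneg (sumInnerSq_nonneg _ _) (by positivity)

theorem sumInnerSq_le_max (hζ₁ : Orthonormal ℝ ζ₁) (hζ₂ : Orthonormal ℝ ζ₂) :
    sumInnerSq ζ₁ ζ₂ ≤ (max d₁ d₂ : ℝ) :=
  (by simpa using sumInnerSq_le_card hζ₁ hζ₂ : sumInnerSq ζ₁ ζ₂ ≤ d₁).trans (le_max_left _ _)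

theorem sumInnerSq_eq_max_iff (hζ₁ : Orthonormal ℝ ζ₁) (hζ₂ : Orthonormal ℝ ζ₂) :
    sumInnerSq ζ₁ ζ₂ = (max d₁ d₂ : ℝ) ↔
      Submodule.span ℝ (Set.range ζ₁) = Submodule.span ℝ (Set.range ζ₂) := by
  have h₁ : sumInnerSq ζ₁ ζ₂ ≤ d₁ := by simpa using sumInnerSq_le_card hζ₁ hζ₂
  have h₂ : sumInnerSq ζ₁ ζ₂ ≤ d₂ := by
    simpa [sumInnerSq_comm ζ₂] using sumInnerSq_le_card hζ₂ hζ₁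
  rw [le_antisymm_iff (a := Submodule.span ℝ (Set.range ζ₁)), ← sumInnerSq_eq_card_iff hζ₁ hζ₂,
    ← sumInnerSq_eq_card_iff hζ₂ hζ₁, sumInnerSq_comm ζ₂, Fintype.card_fin, Fintype.card_fin]
  refine ⟨fun h => ⟨le_antisymm h₁ (h ▸ le_max_left _ _), le_antisymm h₂ (h ▸ le_max_right _ _)⟩,
    fun ⟨hS₁, hS₂⟩ => ?_⟩
  rw [← hS₁, ← hS₂, max_self]

theorem discrDTilde_eq_zero_iff (hd : 0 < max d₁ d₂) (hζ₁ : Orthonormal ℝ ζ₁)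
    (hζ₂ : Orthonormal ℝ ζ₂) :
    discrDTilde d₁ d₂ ζ₁ ζ₂ = 0 ↔
      Submodule.span ℝ (Set.range ζ₁) = Submodule.span ℝ (Set.range ζ₂) := by
  have hm : 0 < (max d₁ d₂ : ℝ) := by exact_mod_cast hd
  rw [discrDTilde_eq_sqrt, Real.sqrt_eq_zero', sub_nonpos, one_le_div hm,
    ← sumInnerSq_eq_max_iff hζ₁ hζ₂]
  exact ⟨fun h => le_antisymm (sumInnerSq_le_max hζ₁ hζ₂) h, ge_of_eq⟩

theorem discrDTilde_eq_one_iff (hd : 0 < max d₁ d₂) :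
    discrDTilde d₁ d₂ ζ₁ ζ₂ = 1 ↔
      Submodule.span ℝ (Set.range ζ₁) ⟂ Submodule.span ℝ (Set.range ζ₂) := by
  have hm : 0 < (max d₁ d₂ : ℝ) := by exact_mod_cast hd
  rw [discrDTilde_eq_sqrt, Real.sqrt_eq_one, sub_eq_self, div_eq_zero_iff, or_iff_left hm.ne',
    sumInnerSq_eq_zero_iff]

theorem discrDTilde_self (d : ℕ) (ζ₁ ζ₂ : Fin d → H) :
    discrDTilde d d ζ₁ ζ₂ = discrD d ζ₁ ζ₂ := by
  rw [discrDTilde, discrD, max_self, Finset.sum_comm]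

end Discrepancy

end

theorem stmt8_general
    {H : Type*} [NormedAddCommGroup H] [InnerProductSpace ℝ H]
    (d₁ d₂ : ℕ) (hd₁ : 1 ≤ d₁)
    (ζ₁ : Fin d₁ → H) (ζ₂ : Fin d₂ → H)
    (hζ₁ : Orthonormal ℝ ζ₁) (hζ₂ : Orthonormal ℝ ζ₂)
    (N₁ N₂ : Submodule ℝ H)
    (hN₁ : N₁ = Submodule.span ℝ (Set.range ζ₁))
    (hN₂ : N₂ = Submodule.span ℝ (Set.range ζ₂)) :
    -- (a) values in [0,1]
    (0 ≤ discrDTilde d₁ d₂ ζ₁ ζ₂ ∧ discrDTilde d₁ d₂ ζ₁ ζ₂ ≤ 1) ∧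
    -- (b) D̃ = 0 iff N₁ = N₂
    (discrDTilde d₁ d₂ ζ₁ ζ₂ = 0 ↔ N₁ = N₂) ∧
    -- (c) D̃ = 1 iff N₁ ⟂ N₂
    (discrDTilde d₁ d₂ ζ₁ ζ₂ = 1 ↔ ∀ x ∈ N₁, ∀ y ∈ N₂, ⟪x, y⟫ = 0) ∧
    -- (d) when d₁ = d₂ = d, D̃ coincides with D
    (∀ (h : d₁ = d₂),
      discrDTilde d₁ d₂ ζ₁ ζ₂ = discrD d₂ (fun j => ζ₁ (Fin.cast h.symm j)) ζ₂) := by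
  subst hN₁ hN₂
  have hd : 0 < max d₁ d₂ := lt_max_of_lt_left hd₁
  refine ⟨⟨discrDTilde_nonneg, discrDTilde_le_one⟩, discrDTilde_eq_zero_iff hd hζ₁ hζ₂,
    (discrDTilde_eq_one_iff hd).trans Submodule.isOrtho_iff_inner_eq, ?_⟩
  rintro rfl
  exact discrDTilde_self _ _ _

/-- Properties of the modified discrepancy measure `D̃` (Section 4.1):
it takes values in `[0,1]`, vanishes iff the subspaces coincide, equals `1` iff
the subspaces are orthogonal, and reduces to `D` when `d₁ = d₂`. -/
theorem stmt8
    {H : Type*} [NormedAddCommGroup H] [InnerProductSpace ℝ H]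
    [TopologicalSpace.SeparableSpace H]
    (d₁ d₂ : ℕ) (hd₁ : 1 ≤ d₁) (hd₂ : 1 ≤ d₂)
    (ζ₁ : Fin d₁ → H) (ζ₂ : Fin d₂ → H)
    (hζ₁ : Orthonormal ℝ ζ₁) (hζ₂ : Orthonormal ℝ ζ₂)
    (N₁ N₂ : Submodule ℝ H)
    (hN₁ : N₁ = Submodule.span ℝ (Set.range ζ₁))
    (hN₂ : N₂ = Submodule.span ℝ (Set.range ζ₂)) :
    -- (a) values in [0,1]
    (0 ≤ discrDTilde d₁ d₂ ζ₁ ζ₂ ∧ discrDTilde d₁ d₂ ζ₁ ζ₂ ≤ 1) ∧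
    -- (b) D̃ = 0 iff N₁ = N₂
    (discrDTilde d₁ d₂ ζ₁ ζ₂ = 0 ↔ N₁ = N₂) ∧
    -- (c) D̃ = 1 iff N₁ ⟂ N₂
    (discrDTilde d₁ d₂ ζ₁ ζ₂ = 1 ↔ ∀ x ∈ N₁, ∀ y ∈ N₂, ⟪x, y⟫ = 0) ∧
    -- (d) when d₁ = d₂ = d, D̃ coincides with D
    (∀ (h : d₁ = d₂),
      discrDTilde d₁ d₂ ζ₁ ζ₂ = discrD d₂ (fun j => ζ₁ (Fin.cast h.symm j)) ζ₂) :=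
  stmt8_general d₁ d₂ hd₁ ζ₁ ζ₂ hζ₁ hζ₂ N₁ N₂ hN₁ hN₂
end

section
/- Let H be a real Hilbert space, let K be a bounded self-adjoint linear operator on H, let K̂ be a bounded linear operator on H, and let ψ, ψ̂ ∈ H be unit vectors and θ, θ̂ ∈ ℝ scalars with Kψ = θψ and K̂ψ̂ = θ̂ψ̂. Then |⟨ψ, (K̂ − K)ψ̂⟩ − (θ̂ − θ)| ≤ |θ̂ − θ| · ‖ψ̂ − ψ‖. -/
open scoped RealInnerProductSpace

/-- Deterministic eigenvalue perturbation inequality (equations (th1:8)–(th1:9)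
in the proof of Theorem 1): for a bounded self-adjoint `K` and bounded `K̂` with
unit eigenvectors `ψ`, `ψ̂` and eigenvalues `θ`, `θ̂`,
`|⟪ψ, (K̂ − K)ψ̂⟫ − (θ̂ − θ)| ≤ |θ̂ − θ| * ‖ψ̂ − ψ‖`. -/
theorem stmt16
    {H : Type*} [NormedAddCommGroup H] [InnerProductSpace ℝ H]
    (K Khat : H →L[ℝ] H)
    (hKsa : ∀ x y : H, ⟪K x, y⟫ = ⟪x, K y⟫)
    (ψ ψhat : H) (hψ : ‖ψ‖ = 1) (hψhat : ‖ψhat‖ = 1)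
    (θ θhat : ℝ) (hKψ : K ψ = θ • ψ) (hKhatψhat : Khat ψhat = θhat • ψhat) :
    |⟪ψ, (Khat - K) ψhat⟫ - (θhat - θ)| ≤ |θhat - θ| * ‖ψhat - ψ‖ := by
  have key : ⟪ψ, (Khat - K) ψhat⟫ = (θhat - θ) * ⟪ψ, ψhat⟫ := by
    have h1 : ⟪ψ, Khat ψhat⟫ = θhat * ⟪ψ, ψhat⟫ := by
      rw [hKhatψhat, real_inner_smul_right]
    have h2 : ⟪ψ, K ψhat⟫ = θ * ⟪ψ, ψhat⟫ := by
      rw [← hKsa, hKψ, real_inner_smul_left]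
    simp only [ContinuousLinearMap.sub_apply, inner_sub_right, h1, h2]
    ring
  have h3 : ⟪ψ, ψhat⟫ - 1 = ⟪ψ, ψhat - ψ⟫ := by
    rw [inner_sub_right, real_inner_self_eq_norm_sq, hψ]; ring
  calc |⟪ψ, (Khat - K) ψhat⟫ - (θhat - θ)|
      = |θhat - θ| * |⟪ψ, ψhat - ψ⟫| := by
        rw [key, ← abs_mul, ← h3]; ring_nf
    _ ≤ |θhat - θ| * ‖ψhat - ψ‖ := by
        apply mul_le_mul_of_nonneg_left _ (abs_nonneg _)
        calc |⟪ψ, ψhat - ψ⟫| ≤ ‖ψ‖ * ‖ψhat - ψ‖ := abs_real_inner_le_norm _ _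
          _ = ‖ψhat - ψ‖ := by rw [hψ, one_mul]
end

section
/- Let H be a real Hilbert space, let ψ_1,…,ψ_d be orthonormal vectors in H, let θ_1 ≥ θ_2 ≥ ⋯ ≥ θ_d > 0, and define the finite-rank self-adjoint operator K x = Σ_{j=1}^d θ_j ⟨ψ_j, x⟩ ψ_j. Let K̂ be a bounded linear operator on H, let ψ̂ ∈ H be a unit vector with K̂ψ̂ = θ̂ψ̂ for a scalar θ̂ satisfying |θ̂| ≤ ‖K − K̂‖_op. Then Σ_{j=1}^d ⟨ψ̂, ψ_j⟩² ≤ 4‖K − K̂‖²_op / θ_d²; that is, the squared norm of the orthogonal projection of ψ̂ onto span{ψ_1,…,ψ_d} is at most 4‖K − K̂‖²_op / θ_d². -/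
open scoped RealInnerProductSpace

/-- Deterministic bound at the core of the proof of Theorem 1(iv)
(equations (th1:10)–(th1:12)): if `ψ̂` is a unit eigenvector of the perturbed
operator `K̂` whose eigenvalue satisfies `|θ̂| ≤ ‖K − K̂‖`, then the squared norm
of the orthogonal projection of `ψ̂` onto `span{ψ_1,…,ψ_d}` is at most
`4‖K − K̂‖² / θ_d²`. -/
theorem stmt17
    {H : Type*} [NormedAddCommGroup H] [InnerProductSpace ℝ H]
    (d : ℕ) (hd : 1 ≤ d)
    (ψ : Fin d → H) (hψ : Orthonormal ℝ ψ)
    (θ : Fin d → ℝ) (hθmono : ∀ i j : Fin d, i ≤ j → θ j ≤ θ i)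
    (hθpos : 0 < θ ⟨d - 1, by omega⟩)
    (K : H →L[ℝ] H)
    (hK : ∀ x : H, K x = ∑ j : Fin d, (θ j * ⟪ψ j, x⟫) • ψ j)
    (Khat : H →L[ℝ] H)
    (ψhat : H) (hψhat : ‖ψhat‖ = 1)
    (θhat : ℝ) (hKhatψhat : Khat ψhat = θhat • ψhat)
    (hθhat : |θhat| ≤ ‖K - Khat‖) :
    ∑ j : Fin d, ⟪ψhat, ψ j⟫ ^ 2 ≤ 4 * ‖K - Khat‖ ^ 2 / θ ⟨d - 1, by omega⟩ ^ 2 := by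
  set ε := ‖K - Khat‖ with hε
  set m : Fin d := ⟨d - 1, by omega⟩ with hm
  have hεnn : 0 ≤ ε := norm_nonneg _
  -- ‖K ψhat‖ ≤ 2 ε
  have h1 : ‖K ψhat‖ ≤ 2 * ε := by
    have : K ψhat = (K - Khat) ψhat + θhat • ψhat := by
      simp [hKhatψhat.symm]
    rw [this]
    calc ‖(K - Khat) ψhat + θhat • ψhat‖
        ≤ ‖(K - Khat) ψhat‖ + ‖θhat • ψhat‖ := norm_add_le _ _
      _ ≤ ε * ‖ψhat‖ + |θhat| * ‖ψhat‖ := by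
          gcongr
          · exact (K - Khat).le_opNorm ψhat
          · rw [norm_smul, Real.norm_eq_abs]
      _ ≤ ε * 1 + ε * 1 := by rw [hψhat]; gcongr
      _ = 2 * ε := by ring
  -- ‖K ψhat‖^2 = Σ (θ j * ⟪ψ j, ψhat⟫)^2
  have h2 : ‖K ψhat‖ ^ 2 = ∑ j : Fin d, (θ j * ⟪ψ j, ψhat⟫) ^ 2 := by
    rw [hK, ← real_inner_self_eq_norm_sq, hψ.inner_sum]
    simp [sq]
  have hθm : 0 < θ m := hθpos
  have h3 : θ m ^ 2 * ∑ j : Fin d, ⟪ψhat, ψ j⟫ ^ 2 ≤ ‖K ψhat‖ ^ 2 := by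
    rw [h2, Finset.mul_sum]
    apply Finset.sum_le_sum
    intro j _
    have hjlt := j.isLt
    have hj : θ m ≤ θ j := hθmono j m (by
      rw [hm, Fin.le_def]
      simpa using by omega)
    have hθj : 0 ≤ θ j := le_of_lt (lt_of_lt_of_le hθm hj)
    rw [mul_pow, real_inner_comm ψhat (ψ j)]
    have : θ m ^ 2 ≤ θ j ^ 2 := by gcongr
    nlinarith [sq_nonneg (⟪ψ j, ψhat⟫ : ℝ)]
  have h4 : ‖K ψhat‖ ^ 2 ≤ 4 * ε ^ 2 := by nlinarith [norm_nonneg (K ψhat)]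
  rw [div_eq_mul_inv]
  have := le_trans h3 h4
  have hp : (0:ℝ) < θ m ^ 2 := by positivity
  rw [← div_eq_mul_inv, le_div_iff₀ hp]
  nlinarith [this]
end
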